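/- Define ξ(s) = φ(s)²/(Q(s)(1-Q(s))) and ζ₀(r) = E[ξ(rS)] for S ~ N(0,1). Then as r → ∞, r·ζ₀(r) converges to A₀ := (2π)^{-1/2} ∫_{-∞}^{∞} ξ(u) du, and this integral is finite. -/

import Mathlib

open Real MeasureTheory Filter

/-- Standard normal density. -/
noncomputable def phi (t : ℝ) : ℝ := (Real.sqrt (2 * π))⁻¹ * Real.exp (-t ^ 2 / 2)

/-- Gaussian tail function `Q(x) = ∫_x^∞ φ`. -/
noncomputable def Qtail (x : ℝ) : ℝ := ∫ t in Set.Ioi x, phi t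

noncomputable def xi (s : ℝ) : ℝ := (phi s) ^ 2 / (Qtail s * (1 - Qtail s))

/-- `ζ₀(r) = E[ξ(rS)]`, `S ~ N(0,1)`. -/
noncomputable def zeta0 (r : ℝ) : ℝ := ∫ s, xi (r * s) ∂(ProbabilityTheory.gaussianReal 0 1)

/-!
The substitution `u = r s` gives `r ζ₀(r) = ∫ ξ(u) φ(u / r) du`. Since `0 < φ(u / r) ≤ φ(0)` and
`φ(u / r) → φ(0)`, dominated convergence yields the limit `φ(0) ∫ ξ = A₀` once `ξ` is integrable.
For integrability, `ξ` is even, and for `x ≥ 0` the crude bounds `Q(x) ≥ φ(x + 1)` and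
`1 - Q(x) ≥ 1/2` give `ξ(x) ≤ 2 φ(x)² / φ(x + 1) = 2 φ(0) e^{-x²/2 + x + 1/2} ≤ 2 φ(0) e^{3/2} e^{-x²/4}`.
-/

open ProbabilityTheory

lemma phi_eq_gaussianPDFReal : phi = gaussianPDFReal 0 1 := by
  ext t
  simp [phi, gaussianPDFReal]

lemma phi_pos (t : ℝ) : 0 < phi t := by
  rw [phi_eq_gaussianPDFReal]
  exact gaussianPDFReal_pos 0 1 t one_ne_zero

lemma continuous_phi : Continuous phi := by
  unfold phi
  fun_prop

lemma integrable_phi : Integrable phi := by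
  rw [phi_eq_gaussianPDFReal]
  exact integrable_gaussianPDFReal 0 1

lemma integral_phi : ∫ t, phi t = 1 := by
  rw [phi_eq_gaussianPDFReal]
  exact integral_gaussianPDFReal_eq_one 0 one_ne_zero

lemma phi_neg (t : ℝ) : phi (-t) = phi t := by
  simp [phi]

lemma phi_le_phi_of_le {a b : ℝ} (ha : 0 ≤ a) (hab : a ≤ b) : phi b ≤ phi a := by
  unfold phi
  gcongr

lemma phi_le_phi_zero (t : ℝ) : phi t ≤ phi 0 := by
  have h : -t ^ 2 / 2 ≤ -(0 : ℝ) ^ 2 / 2 := by nlinarith [sq_nonneg t]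
  unfold phi
  gcongr

lemma phi_zero : phi 0 = (√(2 * π))⁻¹ := by
  simp [phi]

lemma Qtail_eq_setIntegral_Ioc_add {a b : ℝ} (hab : a ≤ b) :
    Qtail a = (∫ t in Set.Ioc a b, phi t) + Qtail b := by
  rw [Qtail, Qtail, ← setIntegral_union (Set.Ioc_disjoint_Ioi le_rfl) measurableSet_Ioi
    integrable_phi.integrableOn integrable_phi.integrableOn, Set.Ioc_union_Ioi_eq_Ioi hab]

lemma antitone_Qtail : Antitone Qtail := fun a b hab => by
  rw [Qtail_eq_setIntegral_Ioc_add hab, le_add_iff_nonneg_left]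
  exact setIntegral_nonneg measurableSet_Ioc fun t _ => (phi_pos t).le

lemma Qtail_neg (x : ℝ) : Qtail (-x) = 1 - Qtail x := by
  have h_Iic : Qtail (-x) = ∫ t in Set.Iic x, phi t := by
    rw [Qtail, ← neg_neg x, ← integral_comp_neg_Ioi, neg_neg]
    simp only [phi_neg]
  rw [h_Iic, eq_sub_iff_add_eq, Qtail,
    intervalIntegral.integral_Iic_add_Ioi integrable_phi.integrableOn integrable_phi.integrableOn,
    integral_phi]

lemma Qtail_zero : Qtail 0 = 1 / 2 := by
  have h := Qtail_neg 0
  rw [neg_zero] at h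
  linarith

lemma Qtail_nonneg (x : ℝ) : 0 ≤ Qtail x :=
  setIntegral_nonneg measurableSet_Ioi fun t _ => (phi_pos t).le

lemma phi_add_one_le_Qtail {x : ℝ} (hx : 0 ≤ x) : phi (x + 1) ≤ Qtail x := by
  have h_Ioc : phi (x + 1) ≤ ∫ t in Set.Ioc x (x + 1), phi t := by
    have h := setIntegral_ge_of_const_le_real (c := phi (x + 1)) measurableSet_Ioc
      (by simp) (fun t ht => phi_le_phi_of_le (hx.trans ht.1.le) ht.2)
      integrable_phi.integrableOn
    simpa using h
  rw [Qtail_eq_setIntegral_Ioc_add (le_add_of_nonneg_right zero_le_one)]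
  linarith [Qtail_nonneg (x + 1)]

lemma Qtail_pos (x : ℝ) : 0 < Qtail x :=
  (phi_pos _).trans_le <|
    (phi_add_one_le_Qtail (abs_nonneg x)).trans (antitone_Qtail (le_abs_self x))

lemma Qtail_mul_one_sub_pos (x : ℝ) : 0 < Qtail x * (1 - Qtail x) := by
  rw [← Qtail_neg]
  exact mul_pos (Qtail_pos x) (Qtail_pos (-x))

lemma xi_nonneg (x : ℝ) : 0 ≤ xi x :=
  div_nonneg (sq_nonneg _) (Qtail_mul_one_sub_pos x).le

lemma xi_neg (x : ℝ) : xi (-x) = xi x := by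
  rw [xi, xi, phi_neg, Qtail_neg, sub_sub_cancel, mul_comm]

lemma measurable_xi : Measurable xi := by
  have := antitone_Qtail.measurable
  have := continuous_phi.measurable
  unfold xi
  fun_prop

lemma phi_sq_eq_mul_phi_add_one (x : ℝ) :
    phi x ^ 2 = phi 0 * exp (-x ^ 2 / 2 + x + 1 / 2) * phi (x + 1) := by
  simp only [phi]
  field_simp
  rw [sq, ← exp_add, ← exp_add, ← exp_add]
  congr 1
  ring

lemma xi_le_exp_neg_sq_of_nonneg {x : ℝ} (hx : 0 ≤ x) :
    xi x ≤ 2 * phi 0 * exp (3 / 2) * exp (-(1 / 4) * x ^ 2) := by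
  have h_one_sub : 1 / 2 ≤ 1 - Qtail x := by
    linarith [antitone_Qtail hx, Qtail_zero]
  have h_denom : phi (x + 1) * (1 / 2) ≤ Qtail x * (1 - Qtail x) :=
    mul_le_mul (phi_add_one_le_Qtail hx) h_one_sub (by norm_num) (Qtail_nonneg x)
  have h_exponent : -x ^ 2 / 2 + x + 1 / 2 ≤ 3 / 2 + -(1 / 4) * x ^ 2 := by
    nlinarith [sq_nonneg (x - 2)]
  calc xi x ≤ phi x ^ 2 / (phi (x + 1) * (1 / 2)) :=
        div_le_div_of_nonneg_left (sq_nonneg _) (by linarith [phi_pos (x + 1)]) h_denom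
    _ = 2 * phi 0 * exp (-x ^ 2 / 2 + x + 1 / 2) := by
        rw [phi_sq_eq_mul_phi_add_one]
        field_simp [(phi_pos (x + 1)).ne']
    _ ≤ 2 * phi 0 * exp (3 / 2 + -(1 / 4) * x ^ 2) :=
        mul_le_mul_of_nonneg_left (exp_le_exp.2 h_exponent) (by linarith [phi_pos 0])
    _ = 2 * phi 0 * exp (3 / 2) * exp (-(1 / 4) * x ^ 2) := by
        rw [exp_add]
        ring

lemma xi_le_exp_neg_sq (x : ℝ) : xi x ≤ 2 * phi 0 * exp (3 / 2) * exp (-(1 / 4) * x ^ 2) := by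
  rcases le_total 0 x with hx | hx
  · exact xi_le_exp_neg_sq_of_nonneg hx
  · simpa [xi_neg] using xi_le_exp_neg_sq_of_nonneg (neg_nonneg.2 hx)

lemma integrable_xi : Integrable xi :=
  ((integrable_exp_neg_mul_sq (by norm_num : (0 : ℝ) < 1 / 4)).const_mul _).mono'
    measurable_xi.aestronglyMeasurable
    (ae_of_all _ fun x => (norm_of_nonneg (xi_nonneg x)).trans_le (xi_le_exp_neg_sq x))

lemma abs_mul_integral_comp_mul_gaussianReal (f : ℝ → ℝ) {r : ℝ} (hr : r ≠ 0) :
    |r| * ∫ s, f (r * s) ∂gaussianReal 0 1 = ∫ u, f u * phi (u / r) := by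
  rw [integral_gaussianReal_eq_integral_smul one_ne_zero, ← phi_eq_gaussianPDFReal,
    ← smul_eq_mul, ← Measure.integral_comp_inv_mul_left]
  congr with u
  rw [smul_eq_mul, mul_inv_cancel_left₀ hr, div_eq_inv_mul, mul_comm]

lemma tendsto_integral_mul_comp_div_atTop {f g : ℝ → ℝ} {C : ℝ} (hf : Integrable f)
    (hg : Continuous g) (hgC : ∀ x, ‖g x‖ ≤ C) :
    Tendsto (fun r => ∫ u, f u * g (u / r)) atTop (nhds (∫ u, f u * g 0)) := by
  refine tendsto_integral_filter_of_dominated_convergence (fun u => ‖f u‖ * C)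
    (Eventually.of_forall fun r => hf.aestronglyMeasurable.mul
      (hg.comp (continuous_id.div_const r)).aestronglyMeasurable)
    (Eventually.of_forall fun r => ae_of_all _ fun u => ?_) (hf.norm.mul_const C)
    (ae_of_all _ fun u => ?_)
  · rw [norm_mul]
    exact mul_le_mul_of_nonneg_left (hgC _) (norm_nonneg _)
  · exact tendsto_const_nhds.mul
      ((hg.tendsto 0).comp (tendsto_const_nhds.div_atTop tendsto_id))

theorem stmt_13 :
    Integrable xi (volume : Measure ℝ) ∧
    Tendsto (fun r : ℝ => r * zeta0 r) atTop
      (nhds ((Real.sqrt (2 * π))⁻¹ * ∫ u, xi u)) := by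
  refine ⟨integrable_xi, ?_⟩
  have h_lim := tendsto_integral_mul_comp_div_atTop integrable_xi continuous_phi
    (C := phi 0) fun t => (norm_of_nonneg (phi_pos t).le).trans_le (phi_le_phi_zero t)
  rw [integral_mul_const, mul_comm, phi_zero] at h_lim
  refine h_lim.congr' ?_
  filter_upwards [eventually_gt_atTop 0] with r hr
  rw [← abs_mul_integral_comp_mul_gaussianReal xi hr.ne', abs_of_pos hr, zeta0]
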